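/- Let {(σ_n, v_n, u_n)}_{n∈ℕ} be a singular system for the compact linear operator K : X → Y. For every x in the closed linear span of {v_n : n ∈ ℕ}, the ℓ^{1/2}-SVD reconstruction of the exact data K x converges to x as the regularization parameter tends to zero: ‖ ∑_n H_{α,σ_n}(σ_n^{1/3} ⟨K x, u_n⟩) v_n − x ‖ → 0 as α → 0⁺ (note that σ_n^{1/3} ⟨K x, u_n⟩ = σ_n^{4/3} ⟨x, v_n⟩). -/

import Mathlib

open scoped InnerProductSpace Topology

noncomputable def halfThresh (α σ t : ℝ) : ℝ :=
  if |t| ≤ 3 / 4 * α ^ ((2 : ℝ) / 3) then 0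
  else 2 / (3 * σ ^ ((4 : ℝ) / 3)) * t *
    (1 + Real.cos (2 / 3 * Real.pi -
      2 / 3 * Real.arccos (α / 8 * (|t| / 3) ^ (-(3 : ℝ) / 2))))

/-!
With `c n = ⟪v n, x⟫`, the argument fed to `H_{α,σ_n}` is `σ_n^{4/3} c n`, on which `H` returns
`c n · (2/3)(1 + cos θ)`: this lies within `|c n|` of `c n`, and tends to `c n` as `α → 0⁺`
because the threshold eventually stops acting and `θ → π/3`. Since `x = ∑ c n v n`, Parseval turns
the reconstruction error into `(∑ |H_{α,σ_n}(σ_n^{4/3} c n) - c n|²)^{1/2}`, which tends to zero by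
dominated convergence against the summable Bessel bound `|c n|²`.
-/

open Filter Submodule

namespace Orthonormal

variable {𝕜 E ι : Type*} [RCLike 𝕜] [NormedAddCommGroup E] [InnerProductSpace 𝕜 E]
  [CompleteSpace E] {v : ι → E}

theorem hasSum_inner_smul_of_mem_topologicalClosure (hv : Orthonormal 𝕜 v) {x : E}
    (hx : x ∈ (span 𝕜 (Set.range v)).topologicalClosure) :
    HasSum (fun i => ⟪v i, x⟫_𝕜 • v i) x := by
  classical
  obtain ⟨a, rfl⟩ : x ∈ LinearMap.range hv.orthogonalFamily.linearIsometry.toLinearMap := by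
    rw [hv.orthogonalFamily.range_linearIsometry]
    convert hx using 3
    simp [← LinearMap.span_singleton_eq_range, ← span_iUnion]
  have hsum := hv.orthogonalFamily.hasSum_linearIsometry a
  have hcoef : ∀ j, ⟪v j, hv.orthogonalFamily.linearIsometry a⟫_𝕜 = a j := by
    intro j
    refine (hsum.mapL (innerSL 𝕜 (v j))).unique ?_
    convert hasSum_ite_eq j (a j) using 1
    ext i
    rcases eq_or_ne i j with rfl | hij
    · simp [hv.1 i]
    · simp [hij, hv.2 hij.symm]
  simpa [hcoef] using hsum

theorem exists_hasSum_smul_of_summable_norm_sq (hv : Orthonormal 𝕜 v) {d : ι → 𝕜}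
    (hd : Summable fun i => ‖d i‖ ^ 2) :
    ∃ y, HasSum (fun i => d i • v i) y ∧ ‖y‖ ^ 2 = ∑' i, ‖d i‖ ^ 2 := by
  have hp : (0 : ℝ) < (2 : ENNReal).toReal := by norm_num
  let f : lp (fun _ : ι => 𝕜) 2 := ⟨d, memℓp_gen (by simpa using hd)⟩
  refine ⟨hv.orthogonalFamily.linearIsometry f,
    by simpa using hv.orthogonalFamily.hasSum_linearIsometry f, ?_⟩
  rw [LinearIsometry.norm_map]
  simpa using lp.norm_rpow_eq_tsum hp f

theorem tendsto_norm_tsum_smul_sub {α : Type*} {l : Filter α} (hv : Orthonormal 𝕜 v) {x : E}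
    (hx : x ∈ (span 𝕜 (Set.range v)).topologicalClosure) {b : α → ι → 𝕜}
    (hb : ∀ a i, ‖b a i - ⟪v i, x⟫_𝕜‖ ≤ ‖⟪v i, x⟫_𝕜‖)
    (hlim : ∀ i, Tendsto (fun a => b a i) l (𝓝 ⟪v i, x⟫_𝕜)) :
    Tendsto (fun a => ‖∑' i, b a i • v i - x‖) l (𝓝 0) := by
  have hc : Summable fun i => ‖⟪v i, x⟫_𝕜‖ ^ 2 := hv.inner_products_summable x
  have hbound : ∀ a i, ‖b a i - ⟪v i, x⟫_𝕜‖ ^ 2 ≤ ‖⟪v i, x⟫_𝕜‖ ^ 2 := fun a i =>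
    pow_le_pow_left₀ (norm_nonneg _) (hb a i) 2
  have hx' := hv.hasSum_inner_smul_of_mem_topologicalClosure hx
  have hnorm : ∀ a, ‖∑' i, b a i • v i - x‖ = √(∑' i, ‖b a i - ⟪v i, x⟫_𝕜‖ ^ 2) := by
    intro a
    obtain ⟨y, hy, hny⟩ := hv.exists_hasSum_smul_of_summable_norm_sq
      (hc.of_nonneg_of_le (fun _ => by positivity) (hbound a))
    have hsum : HasSum (fun i => b a i • v i) (y + x) := by
      simpa [sub_smul] using hy.add hx'
    rw [hsum.tsum_eq, add_sub_cancel_right, ← hny, Real.sqrt_sq (norm_nonneg y)]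
  have hdom : Tendsto (fun a => ∑' i, ‖b a i - ⟪v i, x⟫_𝕜‖ ^ 2) l (𝓝 0) := by
    simpa using tendsto_tsum_of_dominated_convergence (g := fun _ => (0 : ℝ)) hc
      (fun i => by simpa using ((hlim i).sub_const ⟪v i, x⟫_𝕜).norm.pow 2)
      (Eventually.of_forall fun a i => by simpa using hbound a i)
  simpa [hnorm] using hdom.sqrt

end Orthonormal

theorem abs_halfThresh_sub_le (α σ t : ℝ) :
    |halfThresh α σ t - t / σ ^ ((4 : ℝ) / 3)| ≤ |t / σ ^ ((4 : ℝ) / 3)| := by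
  unfold halfThresh
  split_ifs
  · simp
  · set q := Real.cos (2 / 3 * Real.pi -
      2 / 3 * Real.arccos (α / 8 * (|t| / 3) ^ (-(3 : ℝ) / 2)))
    obtain ⟨hq₁, hq₂⟩ : -1 ≤ q ∧ q ≤ 1 := ⟨Real.neg_one_le_cos _, Real.cos_le_one _⟩
    have hdev : 2 / (3 * σ ^ ((4 : ℝ) / 3)) * t * (1 + q) - t / σ ^ ((4 : ℝ) / 3)
        = t / σ ^ ((4 : ℝ) / 3) * ((2 * q - 1) / 3) := by ring
    rw [hdev, abs_mul]
    exact mul_le_of_le_one_right (abs_nonneg _) (abs_le.mpr ⟨by linarith, by linarith⟩)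

theorem tendsto_halfThresh (σ t : ℝ) :
    Tendsto (fun α => halfThresh α σ t) (𝓝[>] 0) (𝓝 (t / σ ^ ((4 : ℝ) / 3))) := by
  set F : ℝ → ℝ := fun α => 2 / (3 * σ ^ ((4 : ℝ) / 3)) * t *
    (1 + Real.cos (2 / 3 * Real.pi -
      2 / 3 * Real.arccos (α / 8 * (|t| / 3) ^ (-(3 : ℝ) / 2))))
  have hF : Continuous F := by fun_prop
  have hF0 : F 0 = t / σ ^ ((4 : ℝ) / 3) := by
    simp only [F, zero_div, zero_mul, Real.arccos_zero]
    rw [show 2 / 3 * Real.pi - 2 / 3 * (Real.pi / 2) = Real.pi / 3 by ring, Real.cos_pi_div_three]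
    ring
  have hthr : Tendsto (fun α : ℝ => 3 / 4 * α ^ ((2 : ℝ) / 3)) (𝓝 0) (𝓝 0) := by
    simpa using
      ((Real.continuous_rpow_const (by norm_num : (0 : ℝ) ≤ 2 / 3)).tendsto 0).const_mul (3 / 4)
  have heq : ∀ᶠ α in 𝓝 0, F α = halfThresh α σ t := by
    rcases eq_or_ne t 0 with rfl | ht
    · exact Eventually.of_forall fun α => by simp [F, halfThresh]
    · filter_upwards [hthr.eventually (gt_mem_nhds (abs_pos.mpr ht))] with α hα
      simp [halfThresh, F, not_le.mpr hα]
  rw [← hF0]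
  exact ((hF.tendsto 0).congr' heq).mono_left nhdsWithin_le_nhds

theorem halfSVD_convergence_general {X Y : Type*}
    [NormedAddCommGroup X] [InnerProductSpace ℝ X] [CompleteSpace X]
    [NormedAddCommGroup Y] [InnerProductSpace ℝ Y] [CompleteSpace Y]
    (K : X →L[ℝ] Y)
    (σ : ℕ → ℝ) (v : ℕ → X) (u : ℕ → Y)
    (hσ : ∀ n, 0 < σ n) (hv : Orthonormal ℝ v)
    (hKadj : ∀ n, (ContinuousLinearMap.adjoint K) (u n) = σ n • v n)
    (x : X) (hx : x ∈ (Submodule.span ℝ (Set.range v)).topologicalClosure) :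
    Filter.Tendsto
      (fun α : ℝ =>
        ‖(∑' n, halfThresh α (σ n) (σ n ^ ((1 : ℝ) / 3) * ⟪K x, u n⟫_ℝ) • v n) - x‖)
      (𝓝[>] 0) (𝓝 0) := by
  have hcoef : ∀ n, σ n ^ ((1 : ℝ) / 3) * ⟪K x, u n⟫_ℝ / σ n ^ ((4 : ℝ) / 3) = ⟪v n, x⟫_ℝ := by
    intro n
    have hpow : σ n ^ ((1 : ℝ) / 3) * σ n = σ n ^ ((4 : ℝ) / 3) := by
      rw [← Real.rpow_add_one (hσ n).ne']
      norm_num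
    rw [← ContinuousLinearMap.adjoint_inner_right, hKadj n, real_inner_smul_right,
      real_inner_comm, ← mul_assoc, hpow,
      mul_div_cancel_left₀ _ (Real.rpow_pos_of_pos (hσ n) _).ne']
  refine hv.tendsto_norm_tsum_smul_sub hx (fun α n => ?_) (fun n => ?_)
  · simpa only [Real.norm_eq_abs, hcoef n] using
      abs_halfThresh_sub_le α (σ n) (σ n ^ ((1 : ℝ) / 3) * ⟪K x, u n⟫_ℝ)
  · simpa only [hcoef n] using
      tendsto_halfThresh (σ n) (σ n ^ ((1 : ℝ) / 3) * ⟪K x, u n⟫_ℝ)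

/-- For every `x` in the closed linear span of the right singular vectors `v n`, the
`ℓ^{1/2}`-SVD reconstruction of the exact data `K x` converges to `x` as `α → 0⁺`. -/
theorem halfSVD_convergence {X Y : Type*}
    [NormedAddCommGroup X] [InnerProductSpace ℝ X] [CompleteSpace X]
    [NormedAddCommGroup Y] [InnerProductSpace ℝ Y] [CompleteSpace Y]
    (K : X →L[ℝ] Y) (hK : IsCompactOperator K)
    (σ : ℕ → ℝ) (v : ℕ → X) (u : ℕ → Y)
    (hσ : ∀ n, 0 < σ n) (hv : Orthonormal ℝ v) (hu : Orthonormal ℝ u)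
    (hKv : ∀ n, K (v n) = σ n • u n)
    (hKadj : ∀ n, (ContinuousLinearMap.adjoint K) (u n) = σ n • v n)
    (x : X) (hx : x ∈ (Submodule.span ℝ (Set.range v)).topologicalClosure) :
    Filter.Tendsto
      (fun α : ℝ =>
        ‖(∑' n, halfThresh α (σ n) (σ n ^ ((1 : ℝ) / 3) * ⟪K x, u n⟫_ℝ) • v n) - x‖)
      (𝓝[>] 0) (𝓝 0) :=
  halfSVD_convergence_general K σ v u hσ hv hKadj x hx
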